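/- arXiv:1911.09755 — 4 statements merged into one kernel-verified Lean document; each statement's English description precedes it below -/
import Mathlib

section
/- Let A ∈ ℚ^{m×n}, b ∈ ℚ^m, and suppose the polyhedron P = {x ∈ ℚ^n : A x ≤ b} is nonempty. Then for c ∈ ℚ^n and d ∈ ℚ, the inequality c · x ≤ d holds for every x ∈ P if and only if there exists y ∈ ℚ^m with y ≥ 0 componentwise, Aᵀ y = c, and b · y ≤ d. -/
open Matrix Finset

/-- Homogeneous Farkas lemma (Bartl-style induction on the number of
functionals, realized as vectors with the dot product). -/
lemma farkas_homog {N : ℕ} : ∀ (k : ℕ) (a : Fin k → Fin N → ℚ) (c : Fin N → ℚ),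
    (∀ x : Fin N → ℚ, (∀ i, a i ⬝ᵥ x ≤ 0) → c ⬝ᵥ x ≤ 0) →
    ∃ l : Fin k → ℚ, (∀ i, 0 ≤ l i) ∧ c = ∑ i, l i • a i := by
  intro k
  induction k with
  | zero =>
    intro a c hc
    refine ⟨0, fun i => le_rfl, ?_⟩
    have h1 : c ⬝ᵥ c ≤ 0 := hc c (fun i => i.elim0)
    have h2 : c = 0 := by
      by_contra hne
      have : 0 < c ⬝ᵥ c := by
        have hnn : 0 ≤ c ⬝ᵥ c := Finset.sum_nonneg fun i _ => mul_self_nonneg _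
        rcases lt_or_eq_of_le hnn with h | h
        · exact h
        · exact absurd ((dotProduct_self_eq_zero (v := c)).mp h.symm) hne
      linarith
    simp [h2]
  | succ k ih =>
    intro a c hc
    by_cases hcase : ∀ x : Fin N → ℚ, (∀ i : Fin k, a i.castSucc ⬝ᵥ x ≤ 0) → c ⬝ᵥ x ≤ 0
    · obtain ⟨l, hl, hlc⟩ := ih (fun i => a i.castSucc) c hcase
      refine ⟨Fin.snoc l 0, ?_, ?_⟩
      · intro i
        refine Fin.lastCases ?_ ?_ i <;> simp [hl]
      · rw [Fin.sum_univ_castSucc]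
        simpa using hlc
    · push_neg at hcase
      obtain ⟨z, hz, hcz⟩ := hcase
      set aL := a (Fin.last k) with haL
      have hzL : 0 < aL ⬝ᵥ z := by
        by_contra h
        push_neg at h
        refine absurd (hc z ?_) (not_le.mpr hcz)
        intro i
        refine Fin.lastCases ?_ ?_ i
        · exact h
        · exact hz
      set z' : Fin N → ℚ := (aL ⬝ᵥ z)⁻¹ • z with hz'
      have hLz' : aL ⬝ᵥ z' = 1 := by
        rw [hz', dotProduct_smul, smul_eq_mul, inv_mul_cancel₀ (ne_of_gt hzL)]
      have hrest : ∀ i : Fin k, a i.castSucc ⬝ᵥ z' ≤ 0 := by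
        intro i
        rw [hz', dotProduct_smul, smul_eq_mul]
        exact mul_nonpos_of_nonneg_of_nonpos (inv_nonneg.mpr hzL.le) (hz i)
      have hcz' : 0 < c ⬝ᵥ z' := by
        rw [hz', dotProduct_smul, smul_eq_mul]
        exact mul_pos (inv_pos.mpr hzL) hcz
      -- modified functionals
      set a' : Fin k → Fin N → ℚ := fun i => a i.castSucc - (a i.castSucc ⬝ᵥ z') • aL with ha'
      set c' : Fin N → ℚ := c - (c ⬝ᵥ z') • aL with hc'
      have hcond : ∀ x : Fin N → ℚ, (∀ i, a' i ⬝ᵥ x ≤ 0) → c' ⬝ᵥ x ≤ 0 := by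
        intro x hx
        set w : Fin N → ℚ := x - (aL ⬝ᵥ x) • z' with hw
        have key : ∀ v : Fin N → ℚ, (v - (v ⬝ᵥ z') • aL) ⬝ᵥ x = v ⬝ᵥ w := by
          intro v
          simp only [hw, hz', sub_dotProduct, dotProduct_sub,
            smul_dotProduct, dotProduct_smul, smul_eq_mul]
          ring
        have hwL : aL ⬝ᵥ w = 0 := by
          rw [hw, dotProduct_sub, dotProduct_smul, hLz', smul_eq_mul]
          ring
        have hcw : c ⬝ᵥ w ≤ 0 := by
          refine hc w ?_
          intro i
          refine Fin.lastCases ?_ ?_ i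
          · exact le_of_eq hwL
          · intro j
            rw [← key (a j.castSucc)]
            exact hx j
        rw [hc', key c]
        exact hcw
      obtain ⟨l, hl, hlc⟩ := ih a' c' hcond
      set μ : ℚ := c ⬝ᵥ z' - ∑ i, l i * (a i.castSucc ⬝ᵥ z') with hμ
      have hμ0 : 0 ≤ μ := by
        have hsum : ∑ i, l i * (a i.castSucc ⬝ᵥ z') ≤ 0 := by
          apply Finset.sum_nonpos
          intro i _
          exact mul_nonpos_of_nonneg_of_nonpos (hl i) (hrest i)
        rw [hμ]; linarith
      refine ⟨Fin.snoc l μ, ?_, ?_⟩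
      · intro i
        refine Fin.lastCases ?_ ?_ i
        · simpa using hμ0
        · intro j; simpa using hl j
      · rw [Fin.sum_univ_castSucc]
        simp only [Fin.snoc_castSucc, Fin.snoc_last]
        have : c = c' + (c ⬝ᵥ z') • aL := by rw [hc']; abel
        rw [this, hlc, ha']
        rw [hμ]
        simp only [smul_sub, Finset.sum_sub_distrib, sub_smul, Finset.sum_smul, smul_smul]
        abel
  
lemma snoc_dotProduct {n : ℕ} (u v : Fin n → ℚ) (α β : ℚ) :
    (Fin.snoc u α : Fin (n + 1) → ℚ) ⬝ᵥ (Fin.snoc v β : Fin (n + 1) → ℚ)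
      = u ⬝ᵥ v + α * β := by
  simp [dotProduct, Fin.sum_univ_castSucc]


/-- **Affine Farkas' Lemma.** If the polyhedron `P = {x : A x ≤ b}` over ℚ is
nonempty, then `c · x ≤ d` holds for every `x ∈ P` iff there is `y ≥ 0` with
`Aᵀ y = c` and `b · y ≤ d`. -/
theorem affine_farkas {m n : ℕ} (A : Matrix (Fin m) (Fin n) ℚ) (b : Fin m → ℚ)
    (hne : ∃ x : Fin n → ℚ, ∀ i, A.mulVec x i ≤ b i)
    (c : Fin n → ℚ) (d : ℚ) :
    (∀ x : Fin n → ℚ, (∀ i, A.mulVec x i ≤ b i) → c ⬝ᵥ x ≤ d) ↔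
      ∃ y : Fin m → ℚ, (∀ i, 0 ≤ y i) ∧ A.transpose.mulVec y = c ∧ b ⬝ᵥ y ≤ d := by
  have hmv : ∀ (x : Fin n → ℚ) (i : Fin m), A.mulVec x i = A i ⬝ᵥ x := fun _ _ => rfl
  constructor
  · intro hc
    -- homogenize
    set row : Fin (m + 1) → Fin (n + 1) → ℚ :=
      Fin.snoc (fun i => Fin.snoc (A i) (-(b i))) (Fin.snoc 0 (-1)) with hrow
    set cc : Fin (n + 1) → ℚ := Fin.snoc c (-d) with hcc
    have hcond : ∀ X : Fin (n + 1) → ℚ, (∀ i, row i ⬝ᵥ X ≤ 0) → cc ⬝ᵥ X ≤ 0 := by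
      intro X hX
      set x : Fin n → ℚ := fun j => X j.castSucc with hx
      set t : ℚ := X (Fin.last n) with ht
      have hXeq : X = Fin.snoc x t := by
        funext j
        refine Fin.lastCases ?_ ?_ j <;> simp [hx, ht]
      have htnn : 0 ≤ t := by
        have := hX (Fin.last m)
        rw [hrow, hXeq] at this
        simp only [Fin.snoc_last] at this
        rw [snoc_dotProduct] at this
        simpa using this
      have hrows : ∀ i : Fin m, A i ⬝ᵥ x ≤ b i * t := by
        intro i
        have := hX i.castSucc
        rw [hrow, hXeq] at this
        simp only [Fin.snoc_castSucc] at this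
        rw [snoc_dotProduct] at this
        linarith
      have hgoal : c ⬝ᵥ x ≤ d * t := by
        rcases eq_or_lt_of_le htnn with ht0 | htpos
        · -- t = 0 : recession direction
          have hA0 : ∀ i : Fin m, A i ⬝ᵥ x ≤ 0 := by
            intro i; have := hrows i; rw [← ht0] at this; simpa using this
          rw [← ht0, mul_zero]
          by_contra hpos
          push_neg at hpos
          obtain ⟨x₀, hx₀⟩ := hne
          set s : ℚ := max 0 ((d - c ⬝ᵥ x₀) / (c ⬝ᵥ x)) + 1 with hs
          have hs0 : 0 ≤ s := by positivity
          have hsgt : (d - c ⬝ᵥ x₀) / (c ⬝ᵥ x) < s := by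
            have := le_max_right 0 ((d - c ⬝ᵥ x₀) / (c ⬝ᵥ x))
            rw [hs]; linarith
          have hfeas : ∀ i, A.mulVec (x₀ + s • x) i ≤ b i := by
            intro i
            rw [hmv, dotProduct_add, dotProduct_smul, smul_eq_mul]
            have h1 : s * (A i ⬝ᵥ x) ≤ 0 :=
              mul_nonpos_of_nonneg_of_nonpos hs0 (hA0 i)
            have h2 : A i ⬝ᵥ x₀ ≤ b i := by rw [← hmv]; exact hx₀ i
            linarith
          have := hc (x₀ + s • x) hfeas
          rw [dotProduct_add, dotProduct_smul, smul_eq_mul] at this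
          have : (d - c ⬝ᵥ x₀) / (c ⬝ᵥ x) ≥ s := by
            rw [ge_iff_le, le_div_iff₀ hpos]; linarith
          linarith
        · -- t > 0 : scale into the polyhedron
          have hfeas : ∀ i, A.mulVec (t⁻¹ • x) i ≤ b i := by
            intro i
            rw [hmv, dotProduct_smul, smul_eq_mul]
            rw [inv_mul_le_iff₀ htpos, mul_comm]
            exact hrows i
          have h1 := hc (t⁻¹ • x) hfeas
          rw [dotProduct_smul, smul_eq_mul] at h1
          have h2 : t * (t⁻¹ * (c ⬝ᵥ x)) ≤ t * d :=
            mul_le_mul_of_nonneg_left h1 htpos.le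
          rw [← mul_assoc, mul_inv_cancel₀ (ne_of_gt htpos), one_mul] at h2
          linarith
      rw [hcc, hXeq, snoc_dotProduct]
      linarith
    obtain ⟨Y, hY, hrep⟩ := farkas_homog (m + 1) row cc hcond
    set y : Fin m → ℚ := fun i => Y i.castSucc with hy
    set μ : ℚ := Y (Fin.last m) with hμ
    have hcomp : ∀ j : Fin (n + 1), cc j = ∑ i, Y i * row i j := by
      intro j
      rw [hrep]
      simp [Finset.sum_apply]
    refine ⟨y, fun i => hY i.castSucc, ?_, ?_⟩
    · funext j
      have := hcomp j.castSucc
      rw [Fin.sum_univ_castSucc] at this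
      simp only [hrow, Fin.snoc_castSucc, Fin.snoc_last, hcc] at this
      simp only [Fin.snoc_castSucc, Pi.zero_apply, mul_zero, add_zero] at this
      rw [Matrix.mulVec, dotProduct]
      rw [this]
      exact Finset.sum_congr rfl fun i _ => mul_comm _ _
    · have := hcomp (Fin.last n)
      rw [Fin.sum_univ_castSucc] at this
      simp only [hrow, Fin.snoc_castSucc, Fin.snoc_last, hcc] at this
      have hμ0 : 0 ≤ μ := hY (Fin.last m)
      have hbY : b ⬝ᵥ y = d - μ := by
        rw [dotProduct]
        have : ∑ i : Fin m, Y i.castSucc * (-(b i)) = -d - μ * (-1) := by linarith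
        have h2 : ∑ i : Fin m, b i * y i = -∑ i : Fin m, Y i.castSucc * (-(b i)) := by
          rw [← Finset.sum_neg_distrib]
          exact Finset.sum_congr rfl fun i _ => by rw [hy]; ring
        rw [h2, this]; ring
      rw [hbY]; linarith
  · rintro ⟨y, hy, hAty, hby⟩ x hx
    have h1 : c ⬝ᵥ x = y ⬝ᵥ A.mulVec x := by
      rw [← hAty, Matrix.mulVec_transpose, ← Matrix.dotProduct_mulVec]
    rw [h1]
    have h2 : y ⬝ᵥ A.mulVec x ≤ y ⬝ᵥ b := by
      apply Finset.sum_le_sum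
      intro i _
      exact mul_le_mul_of_nonneg_left (hx i) (hy i)
    have h3 : y ⬝ᵥ b = b ⬝ᵥ y := dotProduct_comm y b
    linarith
end

section
/- Let (a_j, b_j)_{j ∈ J} be a finite family with a_j ∈ ℚ^n, b_j ∈ ℚ, let i ∈ J, and suppose the relaxed polyhedron P_i = {x ∈ ℚ^n : ∀ j ∈ J, j ≠ i, a_j · x ≤ b_j} is nonempty. Then there is NO irredundancy witness for constraint i (i.e., no x ∈ P_i with a_i · x > b_i) if and only if constraint i is a nonnegative Farkas combination of the other constraints, i.e., there exist y_j ≥ 0 (j ∈ J, j ≠ i) with Σ_{j≠i} y_j a_j = a_i and Σ_{j≠i} y_j b_j ≤ b_i. -/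
/-!
The conic Farkas lemma is proved by induction on the generators: given a functional `z`
separating `c` from the cone of the first generators but positive on the new generator `a m`,
project everything along `a m` onto `ker z` and recurse; a combination of the projections lifts
to a combination of the originals, and a separator of the projections, corrected by a multiple
of `z`, separates the originals. Homogenizing `a ⬝ᵥ x ≤ b` to the row `(b, a)` and adding the
slack generator `(1, 0)` gives the affine version. There a separator `(-l, w)` with `l = 0` is a
recession direction rather than a point, and nonemptiness of the relaxed polyhedron is what
turns it into a witness.
-/

open Matrix Finset Function

theorem LinearMap.SeparatingRight.exists_pos {R M N : Type*} [CommRing R] [LinearOrder R]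
    [IsOrderedRing R] [AddCommGroup M] [Module R M] [AddCommGroup N] [Module R N]
    {p : M →ₗ[R] N →ₗ[R] R} (hp : p.SeparatingRight) {c : N} (hc : c ≠ 0) :
    ∃ z, 0 < p z c := by
  obtain ⟨x, hx⟩ : ∃ x, p x c ≠ 0 := by
    by_contra! h
    exact hc (hp c h)
  rcases hx.lt_or_gt with hneg | hpos
  · exact ⟨-x, by simpa using hneg⟩
  · exact ⟨x, hpos⟩

theorem sum_insert_update_smul {R N J : Type*} [Semiring R] [AddCommMonoid N] [Module R N]
    [DecidableEq J] {m : J} {t : Finset J} (hm : m ∉ t) (y : J → R) (k : R) (a : J → N) :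
    ∑ j ∈ insert m t, update y m k j • a j = k • a m + ∑ j ∈ t, y j • a j := by
  rw [sum_insert hm, update_self]
  congr 1
  exact sum_congr rfl fun j hj => by rw [update_of_ne (ne_of_mem_of_not_mem hj hm)]

theorem apply_sub_smul_eq_apply_sub_smul {𝕜 M N : Type*} [Field 𝕜] [AddCommGroup M]
    [Module 𝕜 M] [AddCommGroup N] [Module 𝕜 N] (p : M →ₗ[𝕜] N →ₗ[𝕜] 𝕜) {z w : M} {u : N}
    (hu : p z u ≠ 0) (v : N) :
    p (w - (p w u / p z u) • z) v = p w (v - (p z v / p z u) • u) := by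
  simp only [map_sub, map_smul, LinearMap.sub_apply, LinearMap.smul_apply, smul_eq_mul]
  field_simp

section Farkas

variable {𝕜 M N J : Type*} [Field 𝕜] [LinearOrder 𝕜] [IsStrictOrderedRing 𝕜]
  [AddCommGroup M] [Module 𝕜 M] [AddCommGroup N] [Module 𝕜 N]

theorem exists_nonneg_sum_insert_eq_of_projection {a : J → N} {c : N} [DecidableEq J] {m : J}
    {t : Finset J} (hm : m ∉ t) {q : J → 𝕜} {qc : 𝕜} (hq : ∀ j ∈ t, q j ≤ 0) (hqc : 0 ≤ qc)
    {μ : J → 𝕜} (hμ : 0 ≤ μ) (hμsum : ∑ j ∈ t, μ j • (a j - q j • a m) = c - qc • a m) :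
    ∃ y : J → 𝕜, 0 ≤ y ∧ ∑ j ∈ insert m t, y j • a j = c := by
  set K := qc - ∑ j ∈ t, μ j * q j
  have hK : 0 ≤ K := sub_nonneg.2 <| (sum_nonpos fun j hj => mul_nonpos_of_nonneg_of_nonpos
    (hμ j) (hq j hj)).trans hqc
  refine ⟨update μ m K, le_update_iff.2 ⟨hK, fun j _ => hμ j⟩, ?_⟩
  simp only [smul_sub, smul_smul, sum_sub_distrib, ← sum_smul] at hμsum
  rw [sum_insert_update_smul hm, sub_smul, ← eq_sub_iff_add_eq.1 hμsum]
  abel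

theorem LinearMap.SeparatingRight.farkas {p : M →ₗ[𝕜] N →ₗ[𝕜] 𝕜} (hp : p.SeparatingRight)
    [DecidableEq J] (s : Finset J) (a : J → N) (c : N) :
    (∃ y : J → 𝕜, 0 ≤ y ∧ ∑ j ∈ s, y j • a j = c) ∨
      ∃ z : M, (∀ j ∈ s, p z (a j) ≤ 0) ∧ 0 < p z c := by
  induction s using Finset.induction_on generalizing a c with
  | empty =>
    by_cases hc : c = 0
    · exact .inl ⟨0, le_rfl, by simp [hc]⟩
    · exact .inr <| (hp.exists_pos hc).imp fun z hz => ⟨by simp, hz⟩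
  | insert m t hm ih =>
    rcases ih a c with ⟨y, hy, hsum⟩ | ⟨z, hz, hzc⟩
    · refine .inl ⟨update y m 0, le_update_iff.2 ⟨le_rfl, fun j _ => hy j⟩, ?_⟩
      rw [sum_insert_update_smul hm, zero_smul, zero_add, hsum]
    by_cases hzm : p z (a m) ≤ 0
    · exact .inr ⟨z, forall_mem_insert _ _ _ |>.2 ⟨hzm, hz⟩, hzc⟩
    push Not at hzm
    set π : N → N := fun v => v - (p z v / p z (a m)) • a m
    rcases ih (fun j => π (a j)) (π c) with ⟨μ, hμ, hμsum⟩ | ⟨w, hw, hwc⟩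
    · exact .inl <| exists_nonneg_sum_insert_eq_of_projection hm
        (fun j hj => div_nonpos_of_nonpos_of_nonneg (hz j hj) hzm.le) (div_pos hzc hzm).le
        hμ hμsum
    · have hπ := apply_sub_smul_eq_apply_sub_smul p (w := w) hzm.ne'
      refine .inr ⟨w - (p w (a m) / p z (a m)) • z, forall_mem_insert _ _ _ |>.2 ⟨?_, ?_⟩, ?_⟩
      · rw [hπ, div_self hzm.ne', one_smul, sub_self, map_zero]
      · simpa only [hπ] using hw
      · simpa only [hπ] using hwc

end Farkas

theorem dotProductBilin_separatingRight {R ι : Type*} [CommRing R] [LinearOrder R]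
    [IsStrictOrderedRing R] [Fintype ι] :
    (dotProductBilin R R : (ι → R) →ₗ[R] _).SeparatingRight :=
  fun y hy => dotProduct_self_eq_zero.1 (hy y)

theorem sum_smul_dotProduct_le {R ι J : Type*} [CommSemiring R] [PartialOrder R]
    [IsOrderedRing R] [Fintype ι] {s : Finset J} {y : J → R} (hy : ∀ j ∈ s, 0 ≤ y j)
    {a : J → ι → R} {b : J → R} {x : ι → R} (hx : ∀ j ∈ s, a j ⬝ᵥ x ≤ b j) :
    (∑ j ∈ s, y j • a j) ⬝ᵥ x ≤ ∑ j ∈ s, y j * b j := by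
  rw [sum_dotProduct]
  refine sum_le_sum fun j hj => ?_
  rw [smul_dotProduct, smul_eq_mul]
  exact mul_le_mul_of_nonneg_left (hx j hj) (hy j hj)

theorem sum_vecCons {α J : Type*} [AddCommMonoid α] {n : ℕ} (s : Finset J) (x : J → α)
    (v : J → Fin n → α) :
    ∑ j ∈ s, vecCons (x j) (v j) = vecCons (∑ j ∈ s, x j) (∑ j ∈ s, v j) := by
  ext k
  refine k.cases ?_ ?_ <;> simp [Finset.sum_apply]

/-- `(w, l)` is a point of the homogenized cone `{(x, l) | a j ⬝ᵥ x ≤ l * b j}` violating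
`α ⬝ᵥ x ≤ l * β`; moving it slightly towards `(x₀, 1)` makes `l` positive while keeping the
violation strict, and dehomogenizing gives the witness. -/
theorem exists_dotProduct_le_and_lt_of_homogeneous {𝕜 ι J : Type*} [Field 𝕜] [LinearOrder 𝕜]
    [IsStrictOrderedRing 𝕜] [Fintype ι] {a : J → ι → 𝕜} {b : J → 𝕜} {α : ι → 𝕜} {β : 𝕜}
    {s : Finset J} {x₀ w : ι → 𝕜} {l : 𝕜} (hx₀ : ∀ j ∈ s, a j ⬝ᵥ x₀ ≤ b j) (hl : 0 ≤ l)
    (hw : ∀ j ∈ s, a j ⬝ᵥ w ≤ l * b j) (hwα : l * β < α ⬝ᵥ w) :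
    ∃ x, (∀ j ∈ s, a j ⬝ᵥ x ≤ b j) ∧ β < α ⬝ᵥ x := by
  set δ := α ⬝ᵥ w - l * β
  set e := α ⬝ᵥ x₀ - β
  set t := δ / (|e| + 1)
  have ht : 0 < t := div_pos (sub_pos.2 hwα) (by positivity)
  have hte : t * |e| < δ := by
    have : t * (|e| + 1) = δ := div_mul_cancel₀ _ (by positivity)
    linarith
  have hlt : 0 < l + t := by linarith
  have hdot : ∀ v, v ⬝ᵥ ((l + t)⁻¹ • (t • x₀ + w)) = (l + t)⁻¹ * (t * (v ⬝ᵥ x₀) + v ⬝ᵥ w) := by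
    intro v
    simp only [dotProduct_smul, dotProduct_add, smul_eq_mul]
  refine ⟨(l + t)⁻¹ • (t • x₀ + w), fun j hj => ?_, ?_⟩
  · rw [hdot, inv_mul_le_iff₀ hlt]
    linarith [mul_le_mul_of_nonneg_left (hx₀ j hj) ht.le, hw j hj]
  · rw [hdot, lt_inv_mul_iff₀ hlt]
    linarith [mul_le_mul_of_nonneg_left (neg_abs_le e) ht.le]

theorem affine_farkas_s2 {𝕜 J : Type*} [Field 𝕜] [LinearOrder 𝕜] [IsStrictOrderedRing 𝕜]
    [DecidableEq J] {n : ℕ} (s : Finset J) (a : J → Fin n → 𝕜) (b : J → 𝕜) (α : Fin n → 𝕜)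
    (β : 𝕜) (hne : ∃ x₀, ∀ j ∈ s, a j ⬝ᵥ x₀ ≤ b j) :
    (∃ y : J → 𝕜, 0 ≤ y ∧ ∑ j ∈ s, y j • a j = α ∧ ∑ j ∈ s, y j * b j ≤ β) ∨
      ∃ x, (∀ j ∈ s, a j ⬝ᵥ x ≤ b j) ∧ β < α ⬝ᵥ x := by
  let g : Option J → Fin (n + 1) → 𝕜 :=
    fun o => o.elim (vecCons 1 0) fun j => vecCons (b j) (a j)
  rcases (dotProductBilin_separatingRight (ι := Fin (n + 1))).farkas (insertNone s) g
    (vecCons β α) with ⟨Y, hY, hYsum⟩ | ⟨z, hz, hzc⟩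
  · simp only [sum_insertNone, g, Option.elim, smul_cons, smul_eq_mul, mul_one, smul_zero,
      sum_vecCons, cons_add_cons, zero_add, vecCons_inj] at hYsum
    have hY₀ : 0 ≤ Y none := hY none
    refine .inl ⟨fun j => Y (some j), fun j => hY _, hYsum.2, ?_⟩
    show ∑ j ∈ s, Y (some j) * b j ≤ β
    linarith [hYsum.1]
  · simp only [forall_mem_insertNone, g, Option.elim, dotProductBilin_apply_apply,
      dotProduct_cons, mul_one, dotProduct_zero, add_zero] at hz hzc
    obtain ⟨hz0, hzs⟩ := hz
    obtain ⟨x₀, hx₀⟩ := hne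
    refine .inr <| exists_dotProduct_le_and_lt_of_homogeneous (w := vecTail z) hx₀
      (neg_nonneg.2 hz0) (fun j hj => ?_) ?_ <;> rw [dotProduct_comm]
    · linarith [hzs j hj]
    · linarith

/-- A constraint `a i · x ≤ b i` of a finite system has no irredundancy witness
(a point violating constraint `i` while satisfying all others) iff it is a
nonnegative Farkas combination of the other constraints, provided the relaxed
polyhedron (dropping constraint `i`) is nonempty. -/
theorem no_witness_iff_farkas_combination {J : Type*} [Fintype J] [DecidableEq J] {n : ℕ}
    (a : J → (Fin n → ℚ)) (b : J → ℚ) (i : J)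
    (hne : ∃ x : Fin n → ℚ, ∀ j, j ≠ i → a j ⬝ᵥ x ≤ b j) :
    (¬ ∃ x : Fin n → ℚ, (∀ j, j ≠ i → a j ⬝ᵥ x ≤ b j) ∧ b i < a i ⬝ᵥ x) ↔
      ∃ y : J → ℚ, (∀ j, j ≠ i → 0 ≤ y j) ∧
        (∑ j ∈ Finset.univ.erase i, y j • a j) = a i ∧
        (∑ j ∈ Finset.univ.erase i, y j * b j) ≤ b i := by
  have hmem : ∀ {j}, j ∈ univ.erase i ↔ j ≠ i := by simp
  constructor
  · intro hnw
    obtain ⟨y, hy, hya, hyb⟩ | ⟨x, hx, hlt⟩ := affine_farkas_s2 (univ.erase i) a b (a i) (b i)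
      (hne.imp fun x hx j hj => hx j (hmem.1 hj))
    · exact ⟨y, fun j _ => hy j, hya, hyb⟩
    · exact absurd ⟨x, fun j hj => hx j (hmem.2 hj), hlt⟩ hnw
  · rintro ⟨y, hy, hya, hyb⟩ ⟨x, hx, hlt⟩
    have hle := sum_smul_dotProduct_le (fun j hj => hy j (hmem.1 hj)) fun j hj => hx j (hmem.1 hj)
    rw [hya] at hle
    linarith
end

section
/- Let (a_j, b_j)_{j ∈ J} be a finite family with a_j ∈ ℚ^n, b_j ∈ ℚ, let p ∈ ℚ^n satisfy a_j · p < b_j for all j ∈ J, and let d ∈ ℚ^n be a ray direction. For each j with a_j · d > 0 set t_j = (b_j − a_j · p)/(a_j · d). Suppose i ∈ J satisfies a_i · d > 0 and t_i < t_j for every j ≠ i with a_j · d > 0. Then constraint i is irredundant: there exists x ∈ ℚ^n with a_i · x > b_i and a_j · x < b_j for all j ≠ i. -/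
open Matrix

/-- **Correctness of the first phase of ray-tracing minimization.**
If `p` satisfies every constraint strictly and, launching a ray from `p` in
direction `d`, constraint `i` is hit strictly first (its hitting parameter
`t i = (b i − a i · p)/(a i · d)` is strictly smaller than that of every other
constraint with `a j · d > 0`), then constraint `i` is irredundant: there is a
point violating it while strictly satisfying all the other constraints. -/
theorem first_hit_constraint_irredundant {J : Type*} [Fintype J] {n : ℕ}
    (a : J → (Fin n → ℚ)) (b : J → ℚ) (p d : Fin n → ℚ)
    (hp : ∀ j, a j ⬝ᵥ p < b j) (i : J) (hid : 0 < a i ⬝ᵥ d)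
    (hfirst : ∀ j, j ≠ i → 0 < a j ⬝ᵥ d →
      (b i - a i ⬝ᵥ p) / (a i ⬝ᵥ d) < (b j - a j ⬝ᵥ p) / (a j ⬝ᵥ d)) :
    ∃ x : Fin n → ℚ, b i < a i ⬝ᵥ x ∧ ∀ j, j ≠ i → a j ⬝ᵥ x < b j := by
  classical
  set T : J → ℚ := fun j => (b j - a j ⬝ᵥ p) / (a j ⬝ᵥ d) with hT
  set s : Finset J := Finset.univ.filter (fun j => j ≠ i ∧ 0 < a j ⬝ᵥ d) with hs
  have hTi_pos : 0 < T i := div_pos (by linarith [hp i]) hid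
  -- choose t with T i < t and t < T j for all j in s
  obtain ⟨t, hti, hts⟩ : ∃ t : ℚ, T i < t ∧ ∀ j ∈ s, t < T j := by
    by_cases hne : s.Nonempty
    · refine ⟨(T i + s.inf' hne T) / 2, ?_, ?_⟩
      · have : T i < s.inf' hne T := by
          apply (Finset.lt_inf'_iff hne).2
          intro j hj
          simp only [hs, Finset.mem_filter] at hj
          exact hfirst j hj.2.1 hj.2.2
        linarith
      · intro j hj
        have h1 : T i < T j := by
          simp only [hs, Finset.mem_filter] at hj
          exact hfirst j hj.2.1 hj.2.2
        have h2 : s.inf' hne T ≤ T j := Finset.inf'_le T hj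
        linarith
    · exact ⟨T i + 1, by linarith, fun j hj => absurd ⟨j, hj⟩ hne⟩
  have ht_pos : 0 < t := lt_trans hTi_pos hti
  refine ⟨p + t • d, ?_, ?_⟩
  · have : a i ⬝ᵥ (p + t • d) = a i ⬝ᵥ p + t * (a i ⬝ᵥ d) := by
      rw [dotProduct_add, dotProduct_smul]; rfl
    rw [this]
    have : T i * (a i ⬝ᵥ d) = b i - a i ⬝ᵥ p := div_mul_cancel₀ _ (ne_of_gt hid)
    nlinarith [mul_lt_mul_of_pos_right hti hid]
  · intro j hj
    have heq : a j ⬝ᵥ (p + t • d) = a j ⬝ᵥ p + t * (a j ⬝ᵥ d) := by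
      rw [dotProduct_add, dotProduct_smul]; rfl
    rw [heq]
    by_cases hjd : 0 < a j ⬝ᵥ d
    · have hjs : j ∈ s := by simp [hs, hj, hjd]
      have := hts j hjs
      have : T j * (a j ⬝ᵥ d) = b j - a j ⬝ᵥ p := div_mul_cancel₀ _ (ne_of_gt hjd)
      nlinarith [mul_lt_mul_of_pos_right (hts j hjs) hjd]
    · push_neg at hjd
      nlinarith [hp j, mul_nonpos_of_nonneg_of_nonpos (le_of_lt ht_pos) hjd]
end

section
/- Let 𝒞 be a finite nonempty family of polyhedra in ℝ^n, each with nonempty topological interior, whose interiors are pairwise disjoint. Call a set F a facet of a polyhedron P ∈ 𝒞 if there exist a ∈ ℝ^n with a ≠ 0 and β ∈ ℝ such that a · x ≤ β for all x ∈ P, F = P ∩ {x : a · x = β}, and the affine span of F has dimension n − 1. Assume that for every P ∈ 𝒞 and every facet F of P there exists Q ∈ 𝒞 with Q ≠ P such that F is also a facet of Q. Then ⋃ 𝒞 = ℝ^n. -/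
open Matrix

/-- A (convex) polyhedron in `ℝ^n`: a set of the form
`{x : ∀ i, a i · x ≤ b i}` for finitely many vectors `a i` and scalars `b i`. -/
def IsPolyhedron {n : ℕ} (P : Set (Fin n → ℝ)) : Prop :=
  ∃ (k : ℕ) (a : Fin k → (Fin n → ℝ)) (b : Fin k → ℝ),
    P = {x : Fin n → ℝ | ∀ i, a i ⬝ᵥ x ≤ b i}

/-- `F` is a facet of `P ⊆ ℝ^n`: there are `a ≠ 0` and `β` such that
`a · x ≤ β` on `P`, `F = P ∩ {x : a · x = β}`, and the affine span of `F` has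
dimension `n − 1`. -/
def IsFacet {n : ℕ} (F P : Set (Fin n → ℝ)) : Prop :=
  ∃ (a : Fin n → ℝ) (β : ℝ), a ≠ 0 ∧ (∀ x ∈ P, a ⬝ᵥ x ≤ β) ∧
    F = P ∩ {x : Fin n → ℝ | a ⬝ᵥ x = β} ∧
    Module.finrank ℝ (affineSpan ℝ F).direction = n - 1

/-!
Write `S = ⋃₀ 𝒞`, fix a finite set `ℋ` of hyperplanes carrying all constraints of all regions,
and call a point lying on two distinct members of `ℋ` a skeleton point. Near a point `x` of `∂S`
off the skeleton, a region `P ∋ x` coincides with a half-space bounded by some `H ∈ ℋ`, so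
`P ∩ H` is a facet of `P`. The adjacent region `Q` sharing this facet is, near `x`, again a
half-space bounded by `H`. If it lay on the same side as `P`, the interiors of `P` and `Q` would
meet; otherwise `P ∪ Q` is a neighbourhood of `x`. Hence `∂S` lies in the skeleton, a finite
union of affine subspaces of codimension two. Its complement is dense and connected (any two
of its points are joined by a broken line missing it), so it cannot be split by `∂S` into
`interior S` and `Sᶜ`; as `interior S ≠ ∅`, this forces `S = ℝⁿ`.
-/

open Module Topology Filter

section Hyperplane

variable {E : Type*} [AddCommGroup E] [Module ℝ E]

def hyperplane (f : Module.Dual ℝ E) (b : ℝ) : AffineSubspace ℝ E where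
  carrier := {x | f x = b}
  smul_vsub_vadd_mem' c p₁ p₂ p₃ h₁ h₂ h₃ := by simp_all

variable {f g : Module.Dual ℝ E} {b d : ℝ}

@[simp]
theorem mem_hyperplane {x : E} : x ∈ hyperplane f b ↔ f x = b := Iff.rfl

theorem hyperplane_ne_top (hf : f ≠ 0) : hyperplane f b ≠ ⊤ := by
  obtain ⟨x, hx⟩ := LinearMap.surjective hf (b + 1)
  intro h
  have : x ∈ hyperplane f b := h ▸ AffineSubspace.mem_top ℝ E x
  rw [mem_hyperplane, hx] at this
  linarith

theorem direction_hyperplane {x : E} (hx : x ∈ hyperplane f b) :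
    (hyperplane f b).direction = LinearMap.ker f := by
  ext v
  rw [← AffineSubspace.vadd_mem_iff_mem_direction v hx, mem_hyperplane, LinearMap.mem_ker,
    vadd_eq_add, map_add, mem_hyperplane.1 hx, add_eq_right]

theorem finrank_direction_hyperplane [FiniteDimensional ℝ E] (hf : f ≠ 0) :
    finrank ℝ (hyperplane f b).direction + 1 = finrank ℝ E := by
  obtain ⟨x, hx⟩ := LinearMap.surjective hf b
  rw [direction_hyperplane (mem_hyperplane.2 hx)]
  exact Module.Dual.finrank_ker_add_one_of_ne_zero hf

theorem exists_eq_smul_of_hyperplane_eq (hf : f ≠ 0) (h : hyperplane f b = hyperplane g d) :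
    ∃ c : ℝ, g = c • f ∧ d = c * b := by
  obtain ⟨p, hp⟩ := LinearMap.surjective hf b
  have hgp : g p = d := mem_hyperplane.1 (h ▸ mem_hyperplane.2 hp)
  have hker : LinearMap.ker f ≤ LinearMap.ker g := fun v hv => by
    have : g (v + p) = d := mem_hyperplane.1 (h ▸ by simp [LinearMap.mem_ker.1 hv, hp])
    simpa [hgp] using this
  obtain ⟨c, hc⟩ := Submodule.mem_span_singleton.1 <| by
    simpa using mem_span_of_iInf_ker_le_ker (L := fun _ : Unit => f) (by simpa using hker)
  exact ⟨c, hc.symm, by rw [← hgp, ← hc, LinearMap.smul_apply, hp, smul_eq_mul]⟩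

theorem halfspace_eq_or_eq_of_hyperplane_eq (hf : f ≠ 0) (hg : g ≠ 0)
    (h : hyperplane f b = hyperplane g d) :
    {x | g x ≤ d} = {x | f x ≤ b} ∨ {x | g x ≤ d} = {x | b ≤ f x} := by
  obtain ⟨c, rfl, rfl⟩ := exists_eq_smul_of_hyperplane_eq hf h
  have hc : c ≠ 0 := by rintro rfl; simp at hg
  rcases hc.lt_or_gt with hc | hc
  · right; ext x; simp [mul_le_mul_left_of_neg hc]
  · left; ext x; simp [mul_le_mul_iff_right₀ hc]

end Hyperplane

theorem affineSpan_insert_inf_ne_top {k V P : Type*} [Field k] [AddCommGroup V] [Module k V]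
    [AddTorsor V P] [FiniteDimensional k V] {H H' : AffineSubspace k P} (hne : H ≠ H')
    (hdim : finrank k H.direction = finrank k H'.direction)
    (hlt : finrank k H.direction < finrank k V) (p : P) :
    affineSpan k (insert p ((H ⊓ H' : AffineSubspace k P) : Set P)) ≠ ⊤ := by
  intro htop
  have hV : finrank k (vectorSpan k (insert p ((H ⊓ H' : AffineSubspace k P) : Set P))) =
      finrank k V := by
    rw [← direction_affineSpan, htop, AffineSubspace.direction_top, finrank_top]
  rcases ((H ⊓ H' : AffineSubspace k P) : Set P).eq_empty_or_nonempty with hempty | ⟨w, hw⟩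
  · rw [hempty, insert_empty_eq, vectorSpan_singleton, finrank_bot] at hV
    omega
  have hstrict : (H ⊓ H').direction < H.direction := by
    rw [AffineSubspace.direction_inf_of_mem hw.1 hw.2]
    refine inf_le_left.lt_of_ne fun h => hne ?_
    exact AffineSubspace.ext_of_direction_eq
      (Submodule.eq_of_le_of_finrank_eq (h ▸ inf_le_right) hdim) ⟨w, hw⟩
  have := Submodule.finrank_lt_finrank_of_lt hstrict
  have := finrank_vectorSpan_insert_le (H ⊓ H') p
  omega

section Skeleton

variable {E : Type*} [AddCommGroup E] [Module ℝ E] {ℋ : Set (AffineSubspace ℝ E)}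

theorem disjoint_segment_of_notMem_affineSpan_insert {s : Set E} {x z : E} (hx : x ∉ s)
    (hz : z ∉ affineSpan ℝ (insert x s)) : Disjoint (segment ℝ x z) s := by
  refine Set.disjoint_left.2 fun w hw hws => hz ?_
  have hline : z ∈ line[ℝ, x, w] :=
    (mem_segment_iff_wbtw.1 hw).collinear.mem_affineSpan_of_mem_of_ne
      (by simp) (by simp) (by simp) (ne_of_mem_of_not_mem hws hx).symm
  exact affineSpan_mono ℝ (Set.insert_subset_insert (Set.singleton_subset_iff.2 hws)) hline

def pairwiseInfs (ℋ : Set (AffineSubspace ℝ E)) : Set (AffineSubspace ℝ E) :=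
  {s | ∃ H ∈ ℋ, ∃ H' ∈ ℋ, H ≠ H' ∧ H ⊓ H' = s}

def skeleton (ℋ : Set (AffineSubspace ℝ E)) : Set E :=
  ⋃ s ∈ pairwiseInfs ℋ, (s : Set E)

theorem mem_skeleton {x : E} :
    x ∈ skeleton ℋ ↔ ∃ H ∈ ℋ, ∃ H' ∈ ℋ, H ≠ H' ∧ x ∈ H ∧ x ∈ H' := by
  simp only [skeleton, pairwiseInfs, Set.mem_iUnion, exists_prop]
  constructor
  · rintro ⟨_, ⟨H, hH, H', hH', hne, rfl⟩, hx⟩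
    exact ⟨H, hH, H', hH', hne, hx.1, hx.2⟩
  · rintro ⟨H, hH, H', hH', hne, hx, hx'⟩
    exact ⟨H ⊓ H', ⟨H, hH, H', hH', hne, rfl⟩, hx, hx'⟩

theorem Set.Finite.pairwiseInfs (hℋ : ℋ.Finite) : (pairwiseInfs ℋ).Finite :=
  (hℋ.image2 (· ⊓ ·) hℋ).subset fun _ ⟨H, hH, H', hH', _, hs⟩ => ⟨H, hH, H', hH', hs⟩

theorem affineSpan_insert_ne_top_of_mem_pairwiseInfs [FiniteDimensional ℝ E]
    (hdim : ∀ H ∈ ℋ, finrank ℝ H.direction + 1 = finrank ℝ E) {s : AffineSubspace ℝ E}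
    (hs : s ∈ pairwiseInfs ℋ) (p : E) : affineSpan ℝ (insert p (s : Set E)) ≠ ⊤ := by
  obtain ⟨H, hH, H', hH', hne, rfl⟩ := hs
  have := hdim H hH
  have := hdim H' hH'
  exact affineSpan_insert_inf_ne_top hne (by omega) (by omega) p

end Skeleton

theorem IsClosed.eq_univ_of_frontier_subset {X : Type*} [TopologicalSpace X] {S T : Set X}
    (hS : IsClosed S) (hSint : (interior S).Nonempty) (hT : IsPreconnected Tᶜ)
    (hTint : interior T = ∅) (hfr : frontier S ⊆ T) : S = Set.univ := by
  by_contra hne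
  have hdense : Dense Tᶜ := interior_eq_empty_iff_dense_compl.1 hTint
  have hcover : Tᶜ ⊆ interior S ∪ Sᶜ := fun y hy => by
    by_cases hyS : y ∈ S
    · exact Or.inl (by_contra fun h => hy (hfr ⟨subset_closure hyS, h⟩))
    · exact Or.inr hyS
  obtain ⟨y, -, hyS, hyS'⟩ := hT _ _ isOpen_interior hS.isOpen_compl hcover
    (Set.inter_comm _ _ ▸ hdense.inter_open_nonempty _ isOpen_interior hSint)
    (Set.inter_comm _ _ ▸ hdense.inter_open_nonempty _ hS.isOpen_compl (Set.nonempty_compl.2 hne))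
  exact hyS' (interior_subset hyS)

section Normed

variable {E : Type*} [NormedAddCommGroup E] [NormedSpace ℝ E]

theorem affineSpan_eq_of_eventually_mem {s : AffineSubspace ℝ E} {t : Set E} {x : E}
    (hts : t ⊆ s) (hx : x ∈ s) (ht : ∀ᶠ y in 𝓝 x, y ∈ s → y ∈ t) : affineSpan ℝ t = s := by
  refine le_antisymm (affineSpan_le.2 hts) fun y hy => ?_
  have hlim : Tendsto (AffineMap.lineMap x y) (𝓝[≠] (0 : ℝ)) (𝓝 x) := by
    simpa using (AffineMap.lineMap_continuous (p := x) (q := y)).tendsto (0 : ℝ)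
      |>.mono_left nhdsWithin_le_nhds
  obtain ⟨c, hct, hc⟩ := ((hlim.eventually ht).and self_mem_nhdsWithin).exists
  have hp : AffineMap.lineMap x y c ∈ t := hct (AffineMap.lineMap_mem c hx hy)
  have hy' : AffineMap.lineMap x (AffineMap.lineMap x y c) c⁻¹ = y := by
    rw [AffineMap.lineMap_lineMap_right, inv_mul_cancel₀ hc, AffineMap.lineMap_apply_one]
  rw [← hy']
  exact affineSpan_mono ℝ (Set.pair_subset (ht.self_of_nhds hx) hp)
    (AffineMap.lineMap_mem_affineSpan_pair _ _ _)

theorem Module.Dual.frequently_lt_of_eq {f : Module.Dual ℝ E} {b : ℝ} {x : E} (hf : f ≠ 0)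
    (hx : f x = b) : ∃ᶠ y in 𝓝 x, f y < b := by
  obtain ⟨v, hv⟩ := LinearMap.surjective hf 1
  have hlim : Tendsto (fun t : ℝ => x - t • v) (𝓝[>] 0) (𝓝 x) := by
    have : Continuous fun t : ℝ => x - t • v := by fun_prop
    simpa using (this.tendsto 0).mono_left nhdsWithin_le_nhds
  refine hlim.frequently (Eventually.frequently ?_)
  filter_upwards [self_mem_nhdsWithin] with t (ht : 0 < t)
  simp [hx, hv, ht]

variable [FiniteDimensional ℝ E]

theorem interior_biUnion_affineSubspace_eq_empty {𝒮 : Set (AffineSubspace ℝ E)}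
    (h𝒮 : 𝒮.Finite) (htop : ⊤ ∉ 𝒮) : interior (⋃ s ∈ 𝒮, (s : Set E)) = ∅ := by
  borelize E
  refine (MeasureTheory.Measure.addHaar (G := E)).interior_eq_empty_of_null ?_
  refine (MeasureTheory.measure_biUnion_null_iff h𝒮.countable).2 fun s hs => ?_
  exact MeasureTheory.Measure.addHaar_affineSubspace _ s (ne_of_mem_of_not_mem hs htop)

theorem interior_affineSubspace_eq_empty {s : AffineSubspace ℝ E} (hs : s ≠ ⊤) :
    interior (s : Set E) = ∅ := by
  simpa using interior_biUnion_affineSubspace_eq_empty (Set.finite_singleton s)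
    (by simpa [eq_comm] using hs)

theorem isPreconnected_compl_biUnion_affineSubspace {𝒮 : Set (AffineSubspace ℝ E)}
    (h𝒮 : 𝒮.Finite) (hthin : ∀ s ∈ 𝒮, ∀ p, affineSpan ℝ (insert p (s : Set E)) ≠ ⊤) :
    IsPreconnected (⋃ s ∈ 𝒮, (s : Set E))ᶜ := by
  refine isPreconnected_of_forall_pair fun x hx y hy => ?_
  simp only [Set.mem_compl_iff, Set.mem_iUnion, not_exists] at hx hy
  let 𝒯 : Set (AffineSubspace ℝ E) :=
    (fun s : AffineSubspace ℝ E => affineSpan ℝ (insert x (s : Set E))) '' 𝒮 ∪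
      (fun s : AffineSubspace ℝ E => affineSpan ℝ (insert y (s : Set E))) '' 𝒮
  have htop : ⊤ ∉ 𝒯 := by
    rintro (⟨s, hs, h⟩ | ⟨s, hs, h⟩)
    exacts [hthin s hs x h, hthin s hs y h]
  -- `z` avoids every affine span of `x` or `y` with a member of `𝒮`, so the broken line
  -- `x → z → y` misses every member of `𝒮`.
  obtain ⟨z, hz⟩ : (⋃ t ∈ 𝒯, (t : Set E))ᶜ.Nonempty := by
    refine Set.nonempty_compl.2 fun h => (Set.univ_nonempty (α := E)).ne_empty ?_
    rw [← interior_univ, ← h]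
    exact interior_biUnion_affineSubspace_eq_empty ((h𝒮.image _).union (h𝒮.image _)) htop
  simp only [Set.mem_compl_iff, Set.mem_iUnion, not_exists] at hz
  refine ⟨segment ℝ x z ∪ segment ℝ y z, ?_, Or.inl (left_mem_segment ℝ x z),
    Or.inr (left_mem_segment ℝ y z), (convex_segment x z).isPreconnected.union z
      (right_mem_segment ℝ x z) (right_mem_segment ℝ y z) (convex_segment y z).isPreconnected⟩
  simp only [Set.subset_def, Set.mem_compl_iff, Set.mem_iUnion, not_exists]
  rintro w (hw | hw) s hs hws
  · exact Set.disjoint_left.1 (disjoint_segment_of_notMem_affineSpan_insert (hx s hs)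
      (hz _ (Or.inl ⟨s, hs, rfl⟩))) hw hws
  · exact Set.disjoint_left.1 (disjoint_segment_of_notMem_affineSpan_insert (hy s hs)
      (hz _ (Or.inr ⟨s, hs, rfl⟩))) hw hws

section Skeleton

variable {ℋ : Set (AffineSubspace ℝ E)} (hℋ : ℋ.Finite)
  (hdim : ∀ H ∈ ℋ, finrank ℝ H.direction + 1 = finrank ℝ E)
include hℋ hdim

theorem isPreconnected_compl_skeleton : IsPreconnected (skeleton ℋ)ᶜ :=
  isPreconnected_compl_biUnion_affineSubspace hℋ.pairwiseInfs fun _ hs =>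
    affineSpan_insert_ne_top_of_mem_pairwiseInfs hdim hs

theorem interior_skeleton_eq_empty : interior (skeleton ℋ) = ∅ := by
  refine interior_biUnion_affineSubspace_eq_empty hℋ.pairwiseInfs fun htop => ?_
  refine affineSpan_insert_ne_top_of_mem_pairwiseInfs hdim htop 0 ?_
  rw [AffineSubspace.top_coe, Set.insert_eq_of_mem (Set.mem_univ _), AffineSubspace.span_univ]

end Skeleton

variable {f g : Module.Dual ℝ E} {b d : ℝ} {x : E}

theorem interior_inter_nonempty_or_mem_interior_union {P Q : Set E} (hf : f ≠ 0) (hg : g ≠ 0)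
    (hH : hyperplane f b = hyperplane g d) (hx : f x = b)
    (hP : ∀ᶠ y in 𝓝 x, f y ≤ b → y ∈ P) (hQ : ∀ᶠ y in 𝓝 x, g y ≤ d → y ∈ Q) :
    (interior P ∩ interior Q).Nonempty ∨ x ∈ interior (P ∪ Q) := by
  rcases halfspace_eq_or_eq_of_hyperplane_eq hf hg hH with hgf | hgf
  · left
    have hPQ : ∀ᶠ y in 𝓝 x, f y ≤ b → y ∈ P ∩ Q := by
      filter_upwards [hP, hQ] with y hyP hyQ hy
      exact ⟨hyP hy, hyQ ((Set.ext_iff.1 hgf y).2 hy)⟩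
    obtain ⟨U, hU, hUo, hxU⟩ := eventually_nhds_iff.1 hPQ
    obtain ⟨y, hy, hyU⟩ :=
      ((Dual.frequently_lt_of_eq hf hx).and_eventually (hUo.mem_nhds hxU)).exists
    have hV : IsOpen (U ∩ {y | f y < b}) :=
      hUo.inter (isOpen_lt (LinearMap.continuous_of_finiteDimensional f) continuous_const)
    rw [← interior_inter]
    exact ⟨y, interior_maximal (fun z hz => hU z hz.1 hz.2.le) hV ⟨hyU, hy⟩⟩
  · right
    rw [mem_interior_iff_mem_nhds]
    filter_upwards [hP, hQ] with y hyP hyQ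
    rcases le_total (f y) b with h | h
    exacts [Or.inl (hyP h), Or.inr (hyQ ((Set.ext_iff.1 hgf y).2 h))]

theorem exists_active_constraint_eventually_imp_forall_le {ι : Type*} [Finite ι]
    {f : ι → Module.Dual ℝ E} {b : ι → ℝ}
    (hint : (interior {y | ∀ i, f i y ≤ b i}).Nonempty) (hx : ∀ i, f i x ≤ b i)
    (hxint : x ∉ interior {y | ∀ i, f i y ≤ b i})
    (hsame : ∀ i j, f i ≠ 0 → f j ≠ 0 → f i x = b i → f j x = b j →
      hyperplane (f i) (b i) = hyperplane (f j) (b j)) :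
    ∃ i, f i ≠ 0 ∧ f i x = b i ∧ ∀ᶠ y in 𝓝 x, f i y ≤ b i → ∀ j, f j y ≤ b j := by
  have hstrict : ∀ᶠ y in 𝓝 x, ∀ i, f i x < b i → f i y < b i := by
    refine eventually_all.2 fun i => ?_
    by_cases hi : f i x < b i
    · filter_upwards [(isOpen_lt (LinearMap.continuous_of_finiteDimensional (f i))
        continuous_const).mem_nhds hi] with y hy using fun _ => hy
    · exact Eventually.of_forall fun y h => absurd h hi
  have hzero : ∀ i, f i = 0 → ∀ y, f i y ≤ b i := fun i hi y => by
    simpa [hi] using hx i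
  obtain ⟨i, hi, hxi⟩ : ∃ i, f i ≠ 0 ∧ f i x = b i := by
    by_contra! hnone
    refine hxint (mem_interior_iff_mem_nhds.2 ?_)
    filter_upwards [hstrict] with y hy j
    by_cases hj : f j = 0
    exacts [hzero j hj y, (hy j ((hx j).lt_of_ne (hnone j hj))).le]
  have hflat : ¬ {y | ∀ i, f i y ≤ b i} ⊆ hyperplane (f i) (b i) := fun hsub => by
    refine hint.ne_empty (Set.subset_eq_empty (interior_mono hsub) ?_)
    exact interior_affineSubspace_eq_empty (hyperplane_ne_top hi)
  refine ⟨i, hi, hxi, ?_⟩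
  filter_upwards [hstrict] with y hy hyi j
  by_cases hj : f j = 0
  · exact hzero j hj y
  rcases (hx j).lt_or_eq with hlt | heq
  · exact (hy j hlt).le
  -- an active constraint bounding the opposite half-space would flatten the polyhedron
  rcases halfspace_eq_or_eq_of_hyperplane_eq hi hj (hsame i j hi hj hxi heq) with h | h
  · exact (Set.ext_iff.1 h y).2 hyi
  · refine absurd (fun z hz => ?_) hflat
    exact le_antisymm (hz i) ((Set.ext_iff.1 h z).1 (hz j))

def IsPolyhedronOver (ℋ : Set (AffineSubspace ℝ E)) (P : Set E) : Prop :=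
  ∃ (k : ℕ) (f : Fin k → Module.Dual ℝ E) (b : Fin k → ℝ),
    P = {x | ∀ i, f i x ≤ b i} ∧ ∀ i, f i ≠ 0 → hyperplane (f i) (b i) ∈ ℋ

variable {ℋ : Set (AffineSubspace ℝ E)} {P : Set E}

theorem IsPolyhedronOver.isClosed (hP : IsPolyhedronOver ℋ P) : IsClosed P := by
  obtain ⟨k, f, b, rfl, -⟩ := hP
  simp only [Set.ofPred_forall]
  exact isClosed_iInter fun i =>
    isClosed_le (LinearMap.continuous_of_finiteDimensional _) continuous_const

theorem IsPolyhedronOver.exists_eventually_halfspace_imp_mem (hP : IsPolyhedronOver ℋ P)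
    (hint : (interior P).Nonempty) (hxP : x ∈ P) (hxint : x ∉ interior P)
    (hx : x ∉ skeleton ℋ) :
    ∃ (f : Module.Dual ℝ E) (b : ℝ), f ≠ 0 ∧ f x = b ∧ hyperplane f b ∈ ℋ ∧
      (∀ y ∈ P, f y ≤ b) ∧ ∀ᶠ y in 𝓝 x, f y ≤ b → y ∈ P := by
  obtain ⟨k, f, b, rfl, hℋ⟩ := hP
  obtain ⟨i, hi, hxi, hloc⟩ := exists_active_constraint_eventually_imp_forall_le hint hxP hxint
    fun i j hi hj hxi hxj => by
      by_contra hne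
      exact hx (mem_skeleton.2 ⟨_, hℋ i hi, _, hℋ j hj, hne, hxi, hxj⟩)
  exact ⟨f i, b i, hi, hxi, hℋ i hi, fun y hy => hy i, hloc⟩

end Normed

section Facet

variable {n : ℕ}

theorem exists_finite_isPolyhedronOver {𝒞 : Set (Set (Fin n → ℝ))} (hfin : 𝒞.Finite)
    (hpoly : ∀ P ∈ 𝒞, IsPolyhedron P) :
    ∃ ℋ : Set (AffineSubspace ℝ (Fin n → ℝ)), ℋ.Finite ∧
      (∀ H ∈ ℋ, finrank ℝ H.direction + 1 = finrank ℝ (Fin n → ℝ)) ∧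
      ∀ P ∈ 𝒞, IsPolyhedronOver ℋ P := by
  choose! k a b hab using hpoly
  let f P i := dotProductEquiv ℝ (Fin n) (a P i)
  refine ⟨⋃ P ∈ 𝒞, (fun i => hyperplane (f P i) (b P i)) '' {i | f P i ≠ 0},
    hfin.biUnion fun P _ => (Set.toFinite _).image _, ?_,
    fun P hP => ⟨k P, f P, b P, hab P hP, fun i hi => Set.mem_biUnion hP ⟨i, hi, rfl⟩⟩⟩
  simp only [Set.mem_iUnion, Set.mem_image]
  rintro _ ⟨P, -, i, hi, rfl⟩
  exact finrank_direction_hyperplane hi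

theorem isFacet_inter_hyperplane {P : Set (Fin n → ℝ)} {f : Module.Dual ℝ (Fin n → ℝ)} {b : ℝ}
    {x : Fin n → ℝ} (hf : f ≠ 0) (hP : ∀ y ∈ P, f y ≤ b) (hx : f x = b)
    (hloc : ∀ᶠ y in 𝓝 x, f y ≤ b → y ∈ P) : IsFacet (P ∩ hyperplane f b) P := by
  set a := (dotProductEquiv ℝ (Fin n)).symm f
  have ha : ∀ y, a ⬝ᵥ y = f y := fun y => by
    rw [← dotProductEquiv_apply_apply, LinearEquiv.apply_symm_apply]
  have hspan : affineSpan ℝ (P ∩ hyperplane f b) = hyperplane f b :=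
    affineSpan_eq_of_eventually_mem Set.inter_subset_right hx
      (hloc.mono fun y hy hyH => ⟨hy (mem_hyperplane.1 hyH).le, hyH⟩)
  refine ⟨a, b, by simpa [a] using hf, by simpa only [ha] using hP, by simp only [ha]; rfl, ?_⟩
  have := finrank_direction_hyperplane hf (b := b)
  rw [hspan]
  simp only [finrank_fin_fun] at this
  omega

theorem mem_skeleton_of_notMem_interior_sUnion {𝒞 : Set (Set (Fin n → ℝ))}
    {ℋ : Set (AffineSubspace ℝ (Fin n → ℝ))} (hℋ : ∀ P ∈ 𝒞, IsPolyhedronOver ℋ P)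
    (hint : ∀ P ∈ 𝒞, (interior P).Nonempty)
    (hdisj : 𝒞.Pairwise fun P Q => Disjoint (interior P) (interior Q))
    (hadj : ∀ P ∈ 𝒞, ∀ F : Set (Fin n → ℝ), IsFacet F P → ∃ Q ∈ 𝒞, Q ≠ P ∧ IsFacet F Q)
    {P : Set (Fin n → ℝ)} (hP : P ∈ 𝒞) {x : Fin n → ℝ} (hxP : x ∈ P)
    (hx : x ∉ interior (⋃₀ 𝒞)) : x ∈ skeleton ℋ := by
  by_contra hxℋ
  have hxint : ∀ Q ∈ 𝒞, x ∉ interior Q := fun Q hQ h =>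
    hx (interior_mono (Set.subset_sUnion_of_mem hQ) h)
  obtain ⟨f, b, hf, hxf, hfℋ, hPf, hlocP⟩ :=
    (hℋ P hP).exists_eventually_halfspace_imp_mem (hint P hP) hxP (hxint P hP) hxℋ
  obtain ⟨Q, hQ, hQP, _, _, -, -, hFQ, -⟩ :=
    hadj P hP _ (isFacet_inter_hyperplane hf hPf hxf hlocP)
  have hxQ : x ∈ Q := (hFQ.subset ⟨hxP, hxf⟩).1
  obtain ⟨g, d, hg, hxg, hgℋ, -, hlocQ⟩ :=
    (hℋ Q hQ).exists_eventually_halfspace_imp_mem (hint Q hQ) hxQ (hxint Q hQ) hxℋ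
  have hfg : hyperplane f b = hyperplane g d := by
    by_contra hne
    exact hxℋ (mem_skeleton.2 ⟨_, hfℋ, _, hgℋ, hne, hxf, hxg⟩)
  rcases interior_inter_nonempty_or_mem_interior_union hf hg hfg hxf hlocP hlocQ with h | h
  · exact Set.not_disjoint_iff_nonempty_inter.2 h (hdisj hP hQ hQP.symm)
  · exact hx (interior_mono (Set.union_subset (Set.subset_sUnion_of_mem hP)
      (Set.subset_sUnion_of_mem hQ)) h)

end Facet

/-- **Adjacency implies full coverage.** If a finite nonempty family of
polyhedra in `ℝ^n`, each with nonempty interior and with pairwise disjoint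
interiors, is such that every facet of every member is also a facet of some
other member, then the family covers all of `ℝ^n`. -/
theorem regions_cover_of_adjacency {n : ℕ}
    (𝒞 : Set (Set (Fin n → ℝ))) (hfin : 𝒞.Finite) (hne : 𝒞.Nonempty)
    (hpoly : ∀ P ∈ 𝒞, IsPolyhedron P)
    (hint : ∀ P ∈ 𝒞, (interior P).Nonempty)
    (hdisj : 𝒞.Pairwise fun P Q => Disjoint (interior P) (interior Q))
    (hadj : ∀ P ∈ 𝒞, ∀ F : Set (Fin n → ℝ), IsFacet F P →
      ∃ Q ∈ 𝒞, Q ≠ P ∧ IsFacet F Q) :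
    ⋃₀ 𝒞 = Set.univ := by
  obtain ⟨ℋ, hℋfin, hℋdim, hℋ⟩ := exists_finite_isPolyhedronOver hfin hpoly
  have hclosed : IsClosed (⋃₀ 𝒞) :=
    Set.sUnion_eq_biUnion ▸ hfin.isClosed_biUnion fun P hP => (hℋ P hP).isClosed
  obtain ⟨P₀, hP₀⟩ := hne
  refine hclosed.eq_univ_of_frontier_subset
    ((hint P₀ hP₀).mono (interior_mono (Set.subset_sUnion_of_mem hP₀)))
    (isPreconnected_compl_skeleton hℋfin hℋdim) (interior_skeleton_eq_empty hℋfin hℋdim) ?_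
  rw [hclosed.frontier_eq]
  rintro x ⟨⟨P, hP, hxP⟩, hx⟩
  exact mem_skeleton_of_notMem_interior_sUnion hℋ hint hdisj hadj hP hxP hx
end
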